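/- arXiv:2210.07527 — 4 statements merged into one kernel-verified Lean document; each statement's English description precedes it below -/
import Mathlib

section
/- Let G_A and G_B be triangle-free simple graphs on vertex sets A ∪ M and B ∪ M respectively, agreeing on M, with A ∩ B ⊆ M, and let c, d ∈ M be two distinct non-adjacent vertices. Define a graph G on A ∪ B ∪ M whose edges within A ∪ M are those of G_A, whose edges within B ∪ M are those of G_B, and where a ∈ A \ M and b ∈ B \ M are adjacent if and only if: a is adjacent to c, b is adjacent to d, and a and b have no common neighbor in M. Then G is triangle-free. -/
/-- The nonstandard amalgamation of triangle-free graphs over `M` with constants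
`c, d` is triangle-free. -/
theorem amalgam_triangle_free {V : Type*} (GA GB G : SimpleGraph V)
    (A B M : Set V) (c d : V)
    (hAtf : GA.CliqueFree 3) (hBtf : GB.CliqueFree 3)
    (hAedge : ∀ x y : V, GA.Adj x y → x ∈ A ∪ M ∧ y ∈ A ∪ M)
    (hBedge : ∀ x y : V, GB.Adj x y → x ∈ B ∪ M ∧ y ∈ B ∪ M)
    (hagree : ∀ x ∈ M, ∀ y ∈ M, (GA.Adj x y ↔ GB.Adj x y))
    (hAB : A ∩ B ⊆ M)
    (hc : c ∈ M) (hd : d ∈ M) (hcd : c ≠ d) (hcdadj : ¬ GA.Adj c d)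
    (hG : ∀ x y : V, G.Adj x y ↔
      (x ∈ A ∪ M ∧ y ∈ A ∪ M ∧ GA.Adj x y) ∨
      (x ∈ B ∪ M ∧ y ∈ B ∪ M ∧ GB.Adj x y) ∨
      (x ∈ A \ M ∧ y ∈ B \ M ∧ GA.Adj x c ∧ GB.Adj y d ∧
        ∀ m ∈ M, ¬ (GA.Adj x m ∧ GB.Adj y m)) ∨
      (y ∈ A \ M ∧ x ∈ B \ M ∧ GA.Adj y c ∧ GB.Adj x d ∧
        ∀ m ∈ M, ¬ (GA.Adj y m ∧ GB.Adj x m))) :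
    G.CliqueFree 3 := by
  classical
  have tri : ∀ (H : SimpleGraph V), H.CliqueFree 3 → ∀ a b e : V,
      H.Adj a b → H.Adj a e → H.Adj b e → False := fun H hH a b e h1 h2 h3 =>
    hH {a, b, e} (SimpleGraph.is3Clique_iff.mpr ⟨a, b, e, h1, h2, h3, rfl⟩)
  have hMM : ∀ v : V, v ∈ A ∪ M → v ∈ B ∪ M → v ∈ M := by
    intro v hvA hvB
    rcases hvA with h | h
    · rcases hvB with h' | h'
      · exact hAB ⟨h, h'⟩
      · exact h'
    · exact h
  have hAnb : ∀ v : V, v ∈ A \ M → v ∉ B ∪ M :=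
    fun v hv hvB => hv.2 (hMM v (Or.inl hv.1) hvB)
  have hBna : ∀ v : V, v ∈ B \ M → v ∉ A ∪ M :=
    fun v hv hvA => hv.2 (hMM v hvA (Or.inl hv.1))
  have crossc : ∀ x y z : V, x ∈ A \ M → y ∈ B \ M → GA.Adj x c → GB.Adj y d →
      (∀ m ∈ M, ¬ (GA.Adj x m ∧ GB.Adj y m)) → G.Adj x z → G.Adj y z → False := by
    intro x y z hxA hyB hxc hyd hno hxz hyz
    rw [hG] at hxz hyz
    rcases hxz with ⟨_, hz1, haxz⟩ | ⟨hx', _, _⟩ | ⟨_, hz2, _, hzd, _⟩ | ⟨_, hx'', _, _, _⟩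
    · -- x-z is an A-edge
      rcases hyz with ⟨hy', _, _⟩ | ⟨_, hz1', hbyz⟩ | ⟨hy'', _, _, _, _⟩ | ⟨hz4, _, hzc, _, _⟩
      · exact hBna y hyB hy'
      · exact hno z (hMM z hz1 hz1') ⟨haxz, hbyz⟩
      · exact hBna y hyB (Or.inl hy''.1)
      · exact tri GA hAtf x z c haxz hxc hzc
    · exact hAnb x hxA hx'
    · -- x-z is a cross edge with z ∈ B \ M
      rcases hyz with ⟨hy', _, _⟩ | ⟨_, _, hbyz⟩ | ⟨hy'', _, _, _, _⟩ | ⟨hz4, _, _, _, _⟩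
      · exact hBna y hyB hy'
      · exact tri GB hBtf y z d hbyz hyd hzd
      · exact hBna y hyB (Or.inl hy''.1)
      · exact hz2.2 (hAB ⟨hz4.1, hz2.1⟩)
    · exact hAnb x hxA (Or.inl hx''.1)
  intro s hs
  rw [SimpleGraph.is3Clique_iff] at hs
  obtain ⟨x, y, z, hxy, hxz, hyz, -⟩ := hs
  rcases (hG x y).mp hxy with ⟨hx1, hy1, haxy⟩ | ⟨hx1, hy1, hbxy⟩ |
      ⟨h1, h2, h3, h4, h5⟩ | ⟨h1, h2, h3, h4, h5⟩
  · -- x-y is an A-edge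
    rcases (hG x z).mp hxz with ⟨hx2, hz2, haxz⟩ | ⟨hx2, hz2, hbxz⟩ |
        ⟨h1, h2, h3, h4, h5⟩ | ⟨h1, h2, h3, h4, h5⟩
    · rcases (hG y z).mp hyz with ⟨hy3, hz3, hayz⟩ | ⟨hy3, hz3, hbyz⟩ |
          ⟨h1, h2, h3, h4, h5⟩ | ⟨h1, h2, h3, h4, h5⟩
      · exact tri GA hAtf x y z haxy haxz hayz
      · have hyM := hMM y hy1 hy3
        have hzM := hMM z hz2 hz3
        exact tri GA hAtf x y z haxy haxz ((hagree y hyM z hzM).mpr hbyz)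
      · exact crossc y z x h1 h2 h3 h4 h5 hxy.symm hxz.symm
      · exact crossc z y x h1 h2 h3 h4 h5 hxz.symm hxy.symm
    · rcases (hG y z).mp hyz with ⟨hy3, hz3, hayz⟩ | ⟨hy3, hz3, hbyz⟩ |
          ⟨h1, h2, h3, h4, h5⟩ | ⟨h1, h2, h3, h4, h5⟩
      · have hxM := hMM x hx1 hx2
        have hzM := hMM z hz3 hz2
        exact tri GA hAtf x y z haxy ((hagree x hxM z hzM).mpr hbxz) hayz
      · have hxM := hMM x hx1 hx2
        have hyM := hMM y hy1 hy3
        exact tri GB hBtf x y z ((hagree x hxM y hyM).mp haxy) hbxz hbyz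
      · exact crossc y z x h1 h2 h3 h4 h5 hxy.symm hxz.symm
      · exact crossc z y x h1 h2 h3 h4 h5 hxz.symm hxy.symm
    · exact crossc x z y h1 h2 h3 h4 h5 hxy hyz.symm
    · exact crossc z x y h1 h2 h3 h4 h5 hyz.symm hxy
  · -- x-y is a B-edge
    rcases (hG x z).mp hxz with ⟨hx2, hz2, haxz⟩ | ⟨hx2, hz2, hbxz⟩ |
        ⟨h1, h2, h3, h4, h5⟩ | ⟨h1, h2, h3, h4, h5⟩
    · rcases (hG y z).mp hyz with ⟨hy3, hz3, hayz⟩ | ⟨hy3, hz3, hbyz⟩ |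
          ⟨h1, h2, h3, h4, h5⟩ | ⟨h1, h2, h3, h4, h5⟩
      · have hxM := hMM x hx2 hx1
        have hyM := hMM y hy3 hy1
        exact tri GA hAtf x y z ((hagree x hxM y hyM).mpr hbxy) haxz hayz
      · have hxM := hMM x hx2 hx1
        have hzM := hMM z hz2 hz3
        exact tri GB hBtf x y z hbxy ((hagree x hxM z hzM).mp haxz) hbyz
      · exact crossc y z x h1 h2 h3 h4 h5 hxy.symm hxz.symm
      · exact crossc z y x h1 h2 h3 h4 h5 hxz.symm hxy.symm
    · rcases (hG y z).mp hyz with ⟨hy3, hz3, hayz⟩ | ⟨hy3, hz3, hbyz⟩ |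
          ⟨h1, h2, h3, h4, h5⟩ | ⟨h1, h2, h3, h4, h5⟩
      · have hyM := hMM y hy3 hy1
        have hzM := hMM z hz3 hz2
        exact tri GB hBtf x y z hbxy hbxz ((hagree y hyM z hzM).mp hayz)
      · exact tri GB hBtf x y z hbxy hbxz hbyz
      · exact crossc y z x h1 h2 h3 h4 h5 hxy.symm hxz.symm
      · exact crossc z y x h1 h2 h3 h4 h5 hxz.symm hxy.symm
    · exact crossc x z y h1 h2 h3 h4 h5 hxy hyz.symm
    · exact crossc z x y h1 h2 h3 h4 h5 hyz.symm hxy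
  · exact crossc x y z h1 h2 h3 h4 h5 hxz hyz
  · exact crossc y x z h1 h2 h3 h4 h5 hyz hxz
end

section
/- Let n ≥ 4 be even and let G be a simple graph with no cycle of length at most n. Let G' be obtained from G by adding, for each unordered pair of vertices {a, b} of G admitting no path of length at most n/2 in G, a set of n/2 − 1 new vertices forming a path of length n/2 from a to b, where the new vertex sets for distinct pairs are pairwise disjoint and carry no other edges. Then G' has no cycle of length at most n. -/
/-!
A cycle of `G'` either stays inside `G`, and is long by hypothesis, or stays among the new
vertices, which is impossible because they induce disjoint paths, or it enters a formal path. A cycle that enters the formal path of `e i` has to run along all of it, in `m`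
steps, because the endpoint it came in through has only one neighbour on that path. The rest of
the cycle is then a path between the two ends of `e i`. That path either lies in `G`, where it
has length more than `m` because `e i` was chosen that way, or it crosses some other formal path
`j` in `m` steps. In the second case `j ≠ i` joins a different pair, so at least one more
step is needed.
-/

open SimpleGraph Sum

namespace SimpleGraph

variable {V W : Type*} {G : SimpleGraph V}

namespace Walk

theorem exists_map_eq_of_forall_mem_range {G' : SimpleGraph W} (φ : G ↪g G') {u v : V}
    (p : G'.Walk (φ u) (φ v)) (hp : ∀ w ∈ p.support, w ∈ Set.range φ) :
    ∃ q : G.Walk u v, q.map φ.toHom = p := by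
  refine ⟨((p.induce _ hp).map φ.isoInduceRange.symm.toHom).copy
    (by simp [Embedding.isoInduceRange]) (by simp [Embedding.isoInduceRange]), ext_support ?_⟩
  simp only [support_map, support_copy, support_induce, List.map_map]
  conv_rhs => rw [← List.attachWith_map_subtype_val hp]
  congr 1
  ext ⟨_, y, rfl⟩
  simp [Embedding.isoInduceRange]

theorem exists_eq_append_cons_of_mem_of_not_mem (S : Set V) :
    ∀ {u v : V} (p : G.Walk u v), u ∈ S → (∃ w ∈ p.support, w ∉ S) →
      ∃ (x y : V) (h : G.Adj x y) (q : G.Walk u x) (r : G.Walk y v),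
        p = q.append (cons h r) ∧ (∀ w ∈ q.support, w ∈ S) ∧ y ∉ S
  | _, _, nil, hu, ⟨_, hw, hwS⟩ => absurd (List.mem_singleton.1 hw ▸ hu) hwS
  | _, _, cons (v := u') h p, hu, ⟨w, hw, hwS⟩ => by
    by_cases hu' : u' ∈ S
    · have hw' : w ∈ p.support := by
        rcases List.mem_cons.1 hw with rfl | hw
        · exact absurd hu hwS
        · exact hw
      obtain ⟨x, y, hxy, q, r, rfl, hq, hy⟩ :=
        exists_eq_append_cons_of_mem_of_not_mem S p hu' ⟨w, hw', hwS⟩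
      exact ⟨x, y, hxy, cons h q, r, rfl, by simpa [hu] using hq, hy⟩
    · exact ⟨_, u', h, nil, p, rfl, by simpa using hu, hu'⟩

theorem le_add_length_of_forall_mem_darts (f : V → ℕ) {u v : V} (p : G.Walk u v)
    (hf : ∀ d ∈ p.darts, f d.fst ≤ f d.snd + 1) : f u ≤ f v + p.length := by
  induction p with
  | nil => simp
  | cons h p ih =>
    have := hf _ List.mem_cons_self
    have := ih fun d hd => hf d (List.mem_cons_of_mem _ hd)
    simp only [length_cons] at *
    omega

theorem IsCycle.append_comm {u x : V} {p : G.Walk u x} {q : G.Walk x u}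
    (h : (p.append q).IsCycle) : (q.append p).IsCycle := by
  rw [isCycle_def] at h ⊢
  obtain ⟨ht, hne, hs⟩ := h
  refine ⟨⟨?_⟩, ?_, ?_⟩
  · rw [edges_append, List.nodup_append_comm, ← edges_append]
    exact ht.edges_nodup
  · rw [Ne, eq_nil_iff_nil, ← length_eq_zero_iff, length_append] at hne ⊢
    omega
  · rw [support_append, List.tail_append_of_ne_nil (support_ne_nil _)] at hs ⊢
    exact List.nodup_append_comm.1 hs

theorem IsCycle.exists_isCycle_cons {v : V} {c : G.Walk v v} (hc : c.IsCycle) (S : Set V)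
    {u w : V} (hu : u ∈ c.support) (huS : u ∈ S) (hw : w ∈ c.support) (hwS : w ∉ S) :
    ∃ (x y : V) (h : G.Adj x y) (p : G.Walk y x),
      x ∈ S ∧ y ∉ S ∧ (cons h p).IsCycle ∧ (cons h p).length = c.length := by
  classical
  obtain ⟨x, y, h, q, r, hqr, hq, hy⟩ := (c.rotate u hu).exists_eq_append_cons_of_mem_of_not_mem
    S huS ⟨w, (mem_support_rotate_iff ..).2 hw, hwS⟩
  have hrot := hc.rotate hu
  have hlen := length_rotate c u hu
  rw [hqr] at hrot hlen
  refine ⟨x, y, h, r.append q, hq x q.end_mem_support, hy, hrot.append_comm, ?_⟩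
  rw [← hlen]
  simp only [length_cons, length_append]
  omega

theorem IsCycle.exists_adj_ne {v : V} {c : G.Walk v v} (hc : c.IsCycle) {u : V}
    (hu : u ∈ c.support) :
    ∃ w ∈ c.support, ∃ w' ∈ c.support, G.Adj u w ∧ G.Adj u w' ∧ w ≠ w' := by
  classical
  have hc' := hc.rotate hu
  have hnil : ¬ (c.rotate u hu).Nil := hc'.not_nil
  refine ⟨_, ?_, _, ?_, adj_snd hnil, (adj_penultimate hnil).symm, hc'.snd_ne_penultimate⟩
  · exact (mem_support_rotate_iff ..).1 (getVert_mem_support _ _)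
  · exact (mem_support_rotate_iff ..).1 (getVert_mem_support _ _)

end Walk

theorem lt_length_of_not_exists_isPath {m : ℕ} {x y : V}
    (h : ¬ ∃ p : G.Walk x y, p.IsPath ∧ p.length ≤ m) (p : G.Walk x y) : m < p.length := by
  classical
  by_contra! hp
  exact h ⟨p.bypass, p.bypass_isPath, p.length_bypass_le_length.trans hp⟩

theorem ne_of_not_exists_isPath {m : ℕ} {x y : V}
    (h : ¬ ∃ p : G.Walk x y, p.IsPath ∧ p.length ≤ m) : x ≠ y := by
  rintro rfl
  exact h ⟨.nil, .nil, by simp⟩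

end SimpleGraph

/-- `G'` is the graph `P(G)`: the vertex `inr (i, k)` is the `(k + 1)`-st inner vertex of the
formal path of length `m` from `(e i).1` to `(e i).2`. -/
structure IsFormalPathExtension {V ι : Type*} (G : SimpleGraph V) (m : ℕ) (e : ι → V × V)
    (G' : SimpleGraph (V ⊕ ι × Fin (m - 1))) : Prop where
  adj_inl_inl : ∀ a b : V, G'.Adj (inl a) (inl b) ↔ G.Adj a b
  adj_inl_inr : ∀ (a : V) (i : ι) (k : Fin (m - 1)),
    G'.Adj (inl a) (inr (i, k)) ↔
      ((k : ℕ) = 0 ∧ a = (e i).1) ∨ ((k : ℕ) = m - 2 ∧ a = (e i).2)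
  adj_inr_inr : ∀ (i j : ι) (k l : Fin (m - 1)),
    G'.Adj (inr (i, k)) (inr (j, l)) ↔ i = j ∧ ((k : ℕ) + 1 = l ∨ (l : ℕ) + 1 = k)

namespace IsFormalPathExtension

variable {V ι : Type*} {G : SimpleGraph V} {m : ℕ} {e : ι → V × V}
  {G' : SimpleGraph (V ⊕ ι × Fin (m - 1))}

def inlEmbedding (hG' : IsFormalPathExtension G m e G') : G ↪g G' :=
  ⟨Function.Embedding.inl, hG'.adj_inl_inl _ _⟩

theorem eq_of_adj_inl_inr (hG' : IsFormalPathExtension G m e G') {a : V} {i : ι}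
    {k l : Fin (m - 1)} (hne : (e i).1 ≠ (e i).2) (hk : G'.Adj (inl a) (inr (i, k)))
    (hl : G'.Adj (inl a) (inr (i, l))) : k = l := by
  rw [hG'.adj_inl_inr] at hk hl
  apply Fin.ext
  rcases hk with ⟨hk, rfl⟩ | ⟨hk, rfl⟩ <;> rcases hl with ⟨hl, hl'⟩ | ⟨hl, hl'⟩
  all_goals first | omega | exact absurd hl' (by simpa [eq_comm] using hne)

theorem exists_eq_append_cons_inl (hG' : IsFormalPathExtension G m e G') {j : ι}
    {l : Fin (m - 1)} {b : V} (p : G'.Walk (inr (j, l)) (inl b)) :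
    ∃ (l' : Fin (m - 1)) (z : V) (h : G'.Adj (inr (j, l')) (inl z))
      (q : G'.Walk (inr (j, l)) (inr (j, l'))) (r : G'.Walk (inl z) (inl b)),
      p = q.append (Walk.cons h r) ∧
        (l : ℕ) ≤ l' + q.length ∧ (l' : ℕ) ≤ l + q.length := by
  obtain ⟨x, y, h, q, r, rfl, hq, hy⟩ := p.exists_eq_append_cons_of_mem_of_not_mem
    {w | ∃ k, w = inr (j, k)} ⟨l, rfl⟩ ⟨inl b, p.end_mem_support, by simp⟩
  obtain ⟨l', rfl⟩ := hq x q.end_mem_support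
  obtain z | ⟨j', k'⟩ := y
  swap
  · obtain ⟨rfl, -⟩ := (hG'.adj_inr_inr _ _ _ _).1 h
    exact absurd ⟨k', rfl⟩ hy
  let f : V ⊕ ι × Fin (m - 1) → ℕ := Sum.elim (fun _ => 0) fun ik => ik.2
  have hf : ∀ d ∈ q.darts, f d.fst ≤ f d.snd + 1 ∧ f d.snd ≤ f d.fst + 1 := by
    intro d hd
    obtain ⟨k₁, hk₁⟩ := hq _ (Walk.dart_fst_mem_support_of_mem_darts _ hd)
    obtain ⟨k₂, hk₂⟩ := hq _ (Walk.dart_snd_mem_support_of_mem_darts _ hd)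
    have hadj := d.adj
    rw [hk₁, hk₂, hG'.adj_inr_inr] at hadj
    simp only [f, hk₁, hk₂, Sum.elim_inr]
    omega
  refine ⟨l', z, h, q, r, rfl, ?_, ?_⟩
  · exact q.le_add_length_of_forall_mem_darts f fun d hd => (hf d hd).1
  · simpa [f] using q.reverse.le_add_length_of_forall_mem_darts f fun d hd => by
      rw [Walk.darts_reverse, List.mem_reverse, List.mem_map] at hd
      obtain ⟨d, hd, rfl⟩ := hd
      exact (hf d hd).2

theorem exists_crossing (hG' : IsFormalPathExtension G m e G') {y b : V} {j : ι}
    {l : Fin (m - 1)} (hne : (e j).1 ≠ (e j).2) (h : G'.Adj (inl y) (inr (j, l)))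
    (p : G'.Walk (inr (j, l)) (inl b)) (hp : (Walk.cons h p).IsTrail) :
    ∃ (z : V) (p₁ : G'.Walk (inr (j, l)) (inl z)) (p₂ : G'.Walk (inl z) (inl b)),
      p = p₁.append p₂ ∧ s(y, z) = s((e j).1, (e j).2) ∧ m ≤ p₁.length + 1 ∧
      ∀ k, G'.Adj (inl z) (inr (j, k)) → s(inl z, inr (j, k)) ∈ p₁.edges := by
  obtain ⟨l', z, h', q, r, rfl, hl, hl'⟩ := hG'.exists_eq_append_cons_inl p
  -- `inl y` has a single neighbour on the formal path, so leaving through `inl y` would reuse `h`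
  have hzy : z ≠ y := by
    rintro rfl
    obtain rfl := hG'.eq_of_adj_inl_inr hne h h'.symm
    rw [Walk.isTrail_cons] at hp
    exact hp.2 (by simp [Walk.edges_append, Sym2.eq_swap])
  have hends : s(y, z) = s((e j).1, (e j).2) ∧ m ≤ q.length + 2 := by
    have := l.isLt
    rcases (hG'.adj_inl_inr _ _ _).1 h with ⟨hl₀, rfl⟩ | ⟨hl₀, rfl⟩ <;>
      rcases (hG'.adj_inl_inr _ _ _).1 h'.symm with ⟨hl₀', rfl⟩ | ⟨hl₀', rfl⟩
    all_goals first
      | exact absurd rfl hzy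
      | exact ⟨rfl, by omega⟩
      | exact ⟨Sym2.eq_swap, by omega⟩
  refine ⟨z, q.append (Walk.cons h' .nil), r,
    by rw [← Walk.append_assoc, Walk.cons_append, Walk.nil_append], hends.1,
    by simp only [Walk.length_append, Walk.length_cons, Walk.length_nil]; omega, ?_⟩
  intro k hk
  obtain rfl := hG'.eq_of_adj_inl_inr hne hk h'.symm
  simp [Walk.edges_append, Sym2.eq_swap]

theorem lt_length_of_isPath_joining_ends (hG' : IsFormalPathExtension G m e G')
    (hfar : ∀ i, ¬ ∃ p : G.Walk (e i).1 (e i).2, p.IsPath ∧ p.length ≤ m)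
    (hinj : ∀ i j, s((e i).1, (e i).2) = s((e j).1, (e j).2) → i = j)
    {i : ι} {z a : V} {k : Fin (m - 1)} (hza : s(z, a) = s((e i).1, (e i).2))
    (hk : G'.Adj (inl a) (inr (i, k))) (p : G'.Walk (inl z) (inl a)) (hp : p.IsPath)
    (hpk : s(inl a, inr (i, k)) ∉ p.edges) : m < p.length := by
  by_cases hV : ∀ w ∈ p.support, w ∈ Set.range inl
  · obtain ⟨q, hq⟩ := p.exists_map_eq_of_forall_mem_range hG'.inlEmbedding hV
    have hlen : q.length = p.length := by
      rw [← Walk.length_map hG'.inlEmbedding.toHom q, hq]; rfl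
    rw [← hlen]
    rcases Sym2.eq_iff.1 hza with ⟨rfl, rfl⟩ | ⟨rfl, rfl⟩
    · exact lt_length_of_not_exists_isPath (hfar i) q
    · simpa using lt_length_of_not_exists_isPath (hfar i) q.reverse
  push Not at hV
  obtain ⟨w, hw, hwV⟩ := hV
  obtain ⟨x, y, h, u, r, rfl, hu, hy⟩ :=
    p.exists_eq_append_cons_of_mem_of_not_mem (Set.range inl) ⟨z, rfl⟩ ⟨w, hw, hwV⟩
  obtain ⟨y', rfl⟩ := hu x u.end_mem_support
  obtain _ | ⟨j, l⟩ := y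
  · exact absurd ⟨_, rfl⟩ hy
  obtain ⟨z', p₁, p₂, rfl, hj, hlen, hedge⟩ := hG'.exists_crossing
    (ne_of_not_exists_isPath (hfar j)) h r hp.of_append_right.isTrail
  by_contra! hle
  simp only [Walk.length_append, Walk.length_cons] at hle
  obtain rfl : z = y' := inl_injective (Walk.eq_of_length_eq_zero (by omega : u.length = 0))
  obtain rfl : z' = a := inl_injective (Walk.eq_of_length_eq_zero (by omega : p₂.length = 0))
  obtain rfl := hinj _ _ (hj.symm.trans hza)
  exact hpk (by simp [Walk.edges_append, hedge k hk])

theorem two_mul_lt_length_of_isCycle_cons (hG' : IsFormalPathExtension G m e G')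
    (hfar : ∀ i, ¬ ∃ p : G.Walk (e i).1 (e i).2, p.IsPath ∧ p.length ≤ m)
    (hinj : ∀ i j, s((e i).1, (e i).2) = s((e j).1, (e j).2) → i = j)
    {a : V} {i : ι} {k : Fin (m - 1)} (h : G'.Adj (inl a) (inr (i, k)))
    (p : G'.Walk (inr (i, k)) (inl a)) (hc : (Walk.cons h p).IsCycle) :
    2 * m < (Walk.cons h p).length := by
  obtain ⟨z, p₁, p₂, rfl, hz, hlen, -⟩ :=
    hG'.exists_crossing (ne_of_not_exists_isPath (hfar i)) h p hc.isTrail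
  rw [Walk.cons_isCycle_iff] at hc
  have := hG'.lt_length_of_isPath_joining_ends hfar hinj (Sym2.eq_swap.trans hz) h p₂
    hc.1.of_append_right fun hm => hc.2 (by simp [Walk.edges_append, hm])
  simp only [Walk.length_cons, Walk.length_append]
  omega

theorem lt_length_of_forall_mem_range_inl (hG' : IsFormalPathExtension G m e G') {n : ℕ}
    (hcyc : ∀ (v : V) (c : G.Walk v v), c.IsCycle → n < c.length)
    {v : V ⊕ ι × Fin (m - 1)} {c : G'.Walk v v} (hc : c.IsCycle)
    (hV : ∀ w ∈ c.support, w ∈ Set.range inl) : n < c.length := by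
  obtain ⟨a, rfl⟩ := hV v c.start_mem_support
  obtain ⟨c', hc'⟩ := c.exists_map_eq_of_forall_mem_range hG'.inlEmbedding hV
  have hlen : c'.length = c.length := by
    rw [← Walk.length_map hG'.inlEmbedding.toHom c', hc']; rfl
  have hcyc' : c'.IsCycle := by
    rw [← Walk.isCycle_map_iff_of_injective (f := hG'.inlEmbedding.toHom)
      hG'.inlEmbedding.injective, hc']
    exact hc
  exact hlen ▸ hcyc a c' hcyc'

theorem not_isCycle_of_forall_not_mem_range_inl (hG' : IsFormalPathExtension G m e G')
    {v : V ⊕ ι × Fin (m - 1)} {c : G'.Walk v v}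
    (hs : ∀ w ∈ c.support, w ∉ Set.range inl) : ¬ c.IsCycle := by
  classical
  intro hc
  have hinr : ∀ w ∈ c.support, ∃ jk, w = inr jk := by
    rintro (a | jk) hw
    · exact absurd ⟨a, rfl⟩ (hs _ hw)
    · exact ⟨jk, rfl⟩
  let f : V ⊕ ι × Fin (m - 1) → ℕ := Sum.elim (fun _ => 0) fun ik => ik.2
  obtain ⟨u, hu, hmax⟩ := c.support.toFinset.exists_max_image f ⟨v, by simp⟩
  rw [List.mem_toFinset] at hu
  obtain ⟨w, hw, w', hw', hadj, hadj', hne⟩ := hc.exists_adj_ne hu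
  have h₁ := hmax _ (List.mem_toFinset.2 hw)
  have h₂ := hmax _ (List.mem_toFinset.2 hw')
  obtain ⟨⟨j, K⟩, rfl⟩ := hinr u hu
  obtain ⟨⟨j₁, l₁⟩, rfl⟩ := hinr w hw
  obtain ⟨⟨j₂, l₂⟩, rfl⟩ := hinr w' hw'
  obtain ⟨rfl, hl₁⟩ := (hG'.adj_inr_inr _ _ _ _).1 hadj
  obtain ⟨rfl, hl₂⟩ := (hG'.adj_inr_inr _ _ _ _).1 hadj'
  simp only [f, Sum.elim_inr] at h₁ h₂
  -- both cycle-neighbours of a vertex of maximal index have the index one lower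
  obtain rfl : l₁ = l₂ := Fin.ext (by omega)
  exact hne rfl

end IsFormalPathExtension

theorem P_no_short_cycles_general {V ι : Type*} (G : SimpleGraph V) (n m : ℕ)
    (hnm : n = 2 * m)
    (hcyc : ∀ (v : V) (c : G.Walk v v), c.IsCycle → n < c.length)
    (e : ι → V × V)
    (hfar : ∀ i, ¬ ∃ p : G.Walk (e i).1 (e i).2, p.IsPath ∧ p.length ≤ m)
    (hinj : ∀ i j, (e i = e j ∨ e i = ((e j).2, (e j).1)) → i = j)
    (G' : SimpleGraph (V ⊕ ι × Fin (m - 1)))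
    (hGinl : ∀ a b : V, G'.Adj (Sum.inl a) (Sum.inl b) ↔ G.Adj a b)
    (hGcross : ∀ (a : V) (i : ι) (k : Fin (m - 1)),
      G'.Adj (Sum.inl a) (Sum.inr (i, k)) ↔
        ((k : ℕ) = 0 ∧ a = (e i).1) ∨ ((k : ℕ) = m - 2 ∧ a = (e i).2))
    (hGinr : ∀ (i j : ι) (k l : Fin (m - 1)),
      G'.Adj (Sum.inr (i, k)) (Sum.inr (j, l)) ↔
        (i = j ∧ ((k : ℕ) + 1 = l ∨ (l : ℕ) + 1 = k))) :
    ∀ (v : V ⊕ ι × Fin (m - 1)) (c : G'.Walk v v), c.IsCycle → n < c.length := by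
  intro v c hc
  have hG' : IsFormalPathExtension G m e G' := ⟨hGinl, hGcross, hGinr⟩
  have hinj' : ∀ i j, s((e i).1, (e i).2) = s((e j).1, (e j).2) → i = j :=
    fun i j h => hinj i j (Sym2.mk_eq_mk_iff.1 h)
  by_cases hV : ∀ w ∈ c.support, w ∈ Set.range inl
  · exact hG'.lt_length_of_forall_mem_range_inl hcyc hc hV
  by_cases hN : ∀ w ∈ c.support, w ∉ Set.range inl
  · exact absurd hc (hG'.not_isCycle_of_forall_not_mem_range_inl hN)
  push Not at hV hN
  obtain ⟨u, hu, huV⟩ := hN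
  obtain ⟨w, hw, hwV⟩ := hV
  obtain ⟨_, y, h, p, ⟨a, rfl⟩, hy, hcp, hlen⟩ := hc.exists_isCycle_cons _ hu huV hw hwV
  obtain _ | ⟨i, k⟩ := y
  · exact absurd ⟨_, rfl⟩ hy
  have := hG'.two_mul_lt_length_of_isCycle_cons hfar hinj' h p hcp
  omega

/-- The construction `P(G)`, adding a new formal path of length `n/2` between each
pair of vertices admitting no path of length at most `n/2`, creates no cycle of
length at most `n`. -/
theorem P_no_short_cycles {V ι : Type*} (G : SimpleGraph V) (n m : ℕ)
    (hn : 4 ≤ n) (hnm : n = 2 * m)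
    (hcyc : ∀ (v : V) (c : G.Walk v v), c.IsCycle → n < c.length)
    (e : ι → V × V)
    (hne : ∀ i, (e i).1 ≠ (e i).2)
    (hfar : ∀ i, ¬ ∃ p : G.Walk (e i).1 (e i).2, p.IsPath ∧ p.length ≤ m)
    (hinj : ∀ i j, (e i = e j ∨ e i = ((e j).2, (e j).1)) → i = j)
    (hsurj : ∀ a b : V, a ≠ b →
      (¬ ∃ p : G.Walk a b, p.IsPath ∧ p.length ≤ m) →
      ∃ i, e i = (a, b) ∨ e i = (b, a))
    (G' : SimpleGraph (V ⊕ ι × Fin (m - 1)))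
    (hGinl : ∀ a b : V, G'.Adj (Sum.inl a) (Sum.inl b) ↔ G.Adj a b)
    (hGcross : ∀ (a : V) (i : ι) (k : Fin (m - 1)),
      G'.Adj (Sum.inl a) (Sum.inr (i, k)) ↔
        ((k : ℕ) = 0 ∧ a = (e i).1) ∨ ((k : ℕ) = m - 2 ∧ a = (e i).2))
    (hGinr : ∀ (i j : ι) (k l : Fin (m - 1)),
      G'.Adj (Sum.inr (i, k)) (Sum.inr (j, l)) ↔
        (i = j ∧ ((k : ℕ) + 1 = l ∨ (l : ℕ) + 1 = k))) :
    ∀ (v : V ⊕ ι × Fin (m - 1)) (c : G'.Walk v v), c.IsCycle → n < c.length :=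
  P_no_short_cycles_general G n m hnm hcyc e hfar hinj G' hGinl hGcross hGinr
end

section
/- Let n ≥ 4 be even and let A ⊆ B be simple graphs without cycles of length at most n, with A closed in B (every path of length at most n/2 in B between two vertices of A lies in A). Identify P(A) with the subgraph of P(B) consisting of A together with the new formal paths between pairs of vertices of A. Then P(A) is closed in P(B): every path of length at most n/2 in P(B) between two vertices of P(A) lies entirely in P(A). -/
/-!
A formal path has length `m = n / 2` and its inner vertices have no neighbours outside it, so a
path of length at most `m` that enters a formal path at an old vertex runs through the whole of it
and is nothing else. Any other short path between vertices of `P(A)` is a path of `B` between two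
vertices of `A`, which lies in `A` by closedness, possibly extended at either end by a piece of a
formal path whose ends are in `A`.
-/

namespace SimpleGraph.Walk

variable {V W : Type*} {G : SimpleGraph V} {H : SimpleGraph W}

theorem exists_walk_of_support_subset_range (f : G ↪g H) {u v : W} (p : H.Walk u v) {a b : V}
    (hu : f a = u) (hv : f b = v) (hp : ∀ x ∈ p.support, x ∈ Set.range f) :
    ∃ q : G.Walk a b, q.length = p.length ∧ q.support.map f = p.support := by
  induction p generalizing a with
  | nil =>
    obtain rfl := f.injective (hu.trans hv.symm)
    exact ⟨.nil, rfl, by simp [hu]⟩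
  | cons h p ih =>
    subst hu
    obtain ⟨c, rfl⟩ := hp _ (List.mem_cons_of_mem _ p.start_mem_support)
    obtain ⟨q, hlen, hsupp⟩ := ih rfl hv fun x hx => hp x (List.mem_cons_of_mem _ hx)
    exact ⟨.cons (f.map_adj_iff.mp h) q, by simp [hlen], by simp [hsupp]⟩

end SimpleGraph.Walk

namespace FormalPath

open SimpleGraph

variable {V ι : Type*} {G : SimpleGraph V} {m : ℕ} {e : ι → V × V}
  {G' : SimpleGraph (V ⊕ ι × Fin (m - 1))}

def IsPathClosed {W : Type*} (H : SimpleGraph W) (m : ℕ) (A : Set W) : Prop :=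
  ∀ (u v : W), u ∈ A → v ∈ A → ∀ p : H.Walk u v,
    p.IsPath → p.length ≤ m → ∀ x ∈ p.support, x ∈ A

/-- The vertex set of `P(A)` inside `P(B)`. -/
def liftedSet (A : Set V) (e : ι → V × V) : Set (V ⊕ ι × Fin (m - 1)) :=
  {z | (∃ x ∈ A, z = Sum.inl x) ∨
    (∃ (i : ι) (k : Fin (m - 1)), z = Sum.inr (i, k) ∧ (e i).1 ∈ A ∧ (e i).2 ∈ A)}

@[simp]
lemma inl_mem_liftedSet {A : Set V} {a : V} :
    Sum.inl a ∈ liftedSet (m := m) A e ↔ a ∈ A := by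
  simp [liftedSet]

@[simp]
lemma inr_mem_liftedSet {A : Set V} {i : ι} {k : Fin (m - 1)} :
    Sum.inr (i, k) ∈ liftedSet A e ↔ (e i).1 ∈ A ∧ (e i).2 ∈ A := by
  simp [liftedSet]

/-- The new vertices `(i, 0), …, (i, m - 2)` form a path of length `m` from `(e i).1` to
`(e i).2`, and have no other neighbours. -/
structure HasFormalPaths (e : ι → V × V) (G' : SimpleGraph (V ⊕ ι × Fin (m - 1))) :
    Prop where
  adj_inl_inr : ∀ (a : V) (i : ι) (k : Fin (m - 1)),
    G'.Adj (Sum.inl a) (Sum.inr (i, k)) ↔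
      ((k : ℕ) = 0 ∧ a = (e i).1) ∨ ((k : ℕ) = m - 2 ∧ a = (e i).2)
  adj_inr_inr : ∀ (i j : ι) (k l : Fin (m - 1)),
    G'.Adj (Sum.inr (i, k)) (Sum.inr (j, l)) ↔
      (i = j ∧ ((k : ℕ) + 1 = l ∨ (l : ℕ) + 1 = k))

namespace HasFormalPaths

lemma adj_inr_cases (hP : HasFormalPaths e G') {i : ι} {k : Fin (m - 1)}
    {z : V ⊕ ι × Fin (m - 1)} (h : G'.Adj (Sum.inr (i, k)) z) :
    (z = Sum.inl (e i).1 ∧ (k : ℕ) = 0) ∨ (z = Sum.inl (e i).2 ∧ (k : ℕ) = m - 2) ∨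
      ∃ l : Fin (m - 1), z = Sum.inr (i, l) ∧ ((k : ℕ) + 1 = l ∨ (l : ℕ) + 1 = k) := by
  rcases z with c | ⟨j, l⟩
  · rcases (hP.adj_inl_inr c i k).mp h.symm with ⟨hk, rfl⟩ | ⟨hk, rfl⟩
    · exact .inl ⟨rfl, hk⟩
    · exact .inr (.inl ⟨rfl, hk⟩)
  · obtain ⟨rfl, hkl⟩ := (hP.adj_inr_inr i j k l).mp h
    exact .inr (.inr ⟨l, rfl, hkl⟩)

/-- `k + 1` and `m - 1 - k` are the distances from `(i, k)` to the two ends of the formal path `i`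
along it. -/
lemma exists_exit (hP : HasFormalPaths e G') {i : ι} {k : Fin (m - 1)}
    {w : V ⊕ ι × Fin (m - 1)} (p : G'.Walk (Sum.inr (i, k)) w) :
    (∀ x ∈ p.support, ∃ l, x = Sum.inr (i, l)) ∨
    ∃ (c : V) (q : G'.Walk (Sum.inr (i, k)) (Sum.inl c)) (r : G'.Walk (Sum.inl c) w),
      p = q.append r ∧ (∀ x ∈ q.support, x = Sum.inl c ∨ ∃ l, x = Sum.inr (i, l)) ∧
      ((c = (e i).1 ∧ (k : ℕ) + 1 ≤ q.length) ∨
        (c = (e i).2 ∧ m - 1 - k ≤ q.length)) := by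
  generalize hu : Sum.inr (i, k) = u at p
  induction p generalizing k with
  | nil =>
    subst hu
    exact .inl fun x hx => ⟨k, by simpa using hx⟩
  | cons h p ih =>
    subst hu
    have hk := k.isLt
    rcases hP.adj_inr_cases h with ⟨rfl, hk0⟩ | ⟨rfl, hk2⟩ | ⟨l, rfl, hkl⟩
    · refine .inr ⟨_, .cons h .nil, p, rfl, ?_, .inl ⟨rfl, by simp [hk0]⟩⟩
      simp
    · refine .inr ⟨_, .cons h .nil, p, rfl, ?_, .inr ⟨rfl, ?_⟩⟩
      · simp
      · simp only [Walk.length_cons, Walk.length_nil]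
        omega
    · rcases ih rfl with hin | ⟨c, q, r, rfl, hq, hc⟩
      · exact .inl fun x hx => (List.mem_cons.mp hx).elim (fun hx => ⟨k, hx⟩) (hin x)
      · refine .inr ⟨c, .cons h q, r, rfl, ?_, ?_⟩
        · intro x hx
          exact (List.mem_cons.mp hx).elim (fun hx => .inr ⟨k, hx⟩) (hq x)
        · simp only [Walk.length_cons]
          rcases hc with ⟨rfl, hc⟩ | ⟨rfl, hc⟩
          · exact .inl ⟨rfl, by omega⟩
          · exact .inr ⟨rfl, by omega⟩

/-- Around `(i, k)` the path must leave the formal path `i` through both of its ends, and that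
already takes `m` steps. -/
lemma ends_eq_of_inr_mem_support (hP : HasFormalPaths e G') {a b : V}
    {p : G'.Walk (Sum.inl a) (Sum.inl b)} (hp : p.IsPath) (hpm : p.length ≤ m)
    {i : ι} {k : Fin (m - 1)} (hik : Sum.inr (i, k) ∈ p.support) :
    (((e i).1 = a ∧ (e i).2 = b) ∨ ((e i).1 = b ∧ (e i).2 = a)) ∧
      ∀ x ∈ p.support, x = Sum.inl a ∨ x = Sum.inl b ∨ ∃ l, x = Sum.inr (i, l) := by
  obtain ⟨p₁, p₂, -, -, rfl⟩ := p.mem_support_iff_exists_append.mp hik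
  rcases hP.exists_exit p₁.reverse with hin | ⟨c₁, q₁, r₁, h₁, hq₁, hc₁⟩
  · obtain ⟨l, hl⟩ := hin _ p₁.reverse.end_mem_support
    cases hl
  rcases hP.exists_exit p₂ with hin | ⟨c₂, q₂, r₂, rfl, hq₂, hc₂⟩
  · obtain ⟨l, hl⟩ := hin _ p₂.end_mem_support
    cases hl
  have hmem₁ : Sum.inl c₁ ∈ p₁.support := by
    have : Sum.inl c₁ ∈ p₁.reverse.support := by
      rw [h₁, Walk.mem_support_append_iff]
      exact .inl q₁.end_mem_support
    simpa [Walk.support_reverse] using this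
  have hne : Sum.inl c₁ ≠ Sum.inl c₂ := hp.ne_of_mem_support_of_append (by simp) hmem₁
    ((Walk.mem_support_append_iff _ _).mpr (.inl q₂.end_mem_support))
  have hlen₁ : p₁.length = q₁.length + r₁.length := by
    simpa using congrArg Walk.length h₁
  simp only [Walk.length_append] at hpm
  have hk := k.isLt
  have hr : r₁.length = 0 ∧ r₂.length = 0 ∧
      (((e i).1 = c₁ ∧ (e i).2 = c₂) ∨ ((e i).1 = c₂ ∧ (e i).2 = c₁)) := by
    rcases hc₁ with ⟨rfl, h₁⟩ | ⟨rfl, h₁⟩ <;>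
      rcases hc₂ with ⟨rfl, h₂⟩ | ⟨rfl, h₂⟩
    all_goals first | exact absurd rfl hne | exact ⟨by omega, by omega, by simp⟩
  obtain ⟨hr₁, hr₂, hends⟩ := hr
  obtain rfl : c₁ = a := Sum.inl_injective (r₁.eq_of_length_eq_zero hr₁)
  obtain rfl : c₂ = b := Sum.inl_injective (r₂.eq_of_length_eq_zero hr₂)
  refine ⟨hends, fun x hx => ?_⟩
  have hsupp₁ := Walk.nil_iff_support_eq.mp (Walk.length_eq_zero_iff.mp hr₁)
  have hsupp₂ := Walk.nil_iff_support_eq.mp (Walk.length_eq_zero_iff.mp hr₂)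
  rcases (Walk.mem_support_append_iff _ _).mp hx with hx | hx
  · rw [← List.mem_reverse, ← Walk.support_reverse, h₁, Walk.mem_support_append_iff,
      hsupp₁, List.mem_singleton] at hx
    rcases hx with hx | rfl
    · exact (hq₁ x hx).elim .inl (.inr ∘ .inr)
    · exact .inl rfl
  · rw [Walk.mem_support_append_iff, hsupp₂, List.mem_singleton] at hx
    rcases hx with hx | rfl
    · exact (hq₂ x hx).elim (.inr ∘ .inl) (.inr ∘ .inr)
    · exact .inr (.inl rfl)

lemma exists_exit_liftedSet (hP : HasFormalPaths e G') {A : Set V} {i : ι} {k : Fin (m - 1)}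
    {w : V ⊕ ι × Fin (m - 1)} (hik : Sum.inr (i, k) ∈ liftedSet A e)
    (p : G'.Walk (Sum.inr (i, k)) w) :
    (∀ x ∈ p.support, x ∈ liftedSet A e) ∨
    ∃ c ∈ A, ∃ (q : G'.Walk (Sum.inr (i, k)) (Sum.inl c)) (r : G'.Walk (Sum.inl c) w),
      p = q.append r ∧ ∀ x ∈ q.support, x ∈ liftedSet A e := by
  rw [inr_mem_liftedSet] at hik
  have chain_mem (l : Fin (m - 1)) : Sum.inr (i, l) ∈ liftedSet A e :=
    inr_mem_liftedSet.mpr hik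
  rcases hP.exists_exit p with hin | ⟨c, q, r, rfl, hq, hc⟩
  · refine .inl fun x hx => ?_
    obtain ⟨l, rfl⟩ := hin x hx
    exact chain_mem l
  · have hcA : c ∈ A := by
      rcases hc with ⟨rfl, -⟩ | ⟨rfl, -⟩
      exacts [hik.1, hik.2]
    refine .inr ⟨c, hcA, q, r, rfl, fun x hx => ?_⟩
    rcases hq x hx with rfl | ⟨l, rfl⟩
    · exact inl_mem_liftedSet.mpr hcA
    · exact chain_mem l

end HasFormalPaths

lemma mem_liftedSet_of_inl_inl (hGinl : ∀ a b : V, G'.Adj (Sum.inl a) (Sum.inl b) ↔ G.Adj a b)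
    (hP : HasFormalPaths e G') {A : Set V} (hA : IsPathClosed G m A) {a b : V} (ha : a ∈ A)
    (hb : b ∈ A) (p : G'.Walk (Sum.inl a) (Sum.inl b)) (hp : p.IsPath) (hpm : p.length ≤ m) :
    ∀ x ∈ p.support, x ∈ liftedSet A e := by
  by_cases hV : ∀ x ∈ p.support, x ∈ Set.range Sum.inl
  · let f : G ↪g G' := ⟨Function.Embedding.inl, hGinl _ _⟩
    obtain ⟨q, hlen, hsupp⟩ := Walk.exists_walk_of_support_subset_range f p rfl rfl hV
    have hq : q.IsPath := by
      rw [Walk.isPath_def, ← List.nodup_map_iff f.injective, hsupp]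
      exact hp.support_nodup
    intro x hx
    rw [← hsupp] at hx
    obtain ⟨c, hc, rfl⟩ := List.mem_map.mp hx
    exact inl_mem_liftedSet.mpr (hA a b ha hb q hq (hlen ▸ hpm) c hc)
  · obtain ⟨y, hy, hyV⟩ := not_forall₂.mp hV
    obtain ⟨⟨i, k⟩, rfl⟩ : ∃ ik, y = Sum.inr ik := by
      rcases y with c | ik
      exacts [absurd ⟨c, rfl⟩ hyV, ⟨ik, rfl⟩]
    obtain ⟨hends, hsupp⟩ := hP.ends_eq_of_inr_mem_support hp hpm hy
    have hi : (e i).1 ∈ A ∧ (e i).2 ∈ A := by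
      rcases hends with ⟨h₁, h₂⟩ | ⟨h₁, h₂⟩ <;> simp [h₁, h₂, ha, hb]
    intro x hx
    rcases hsupp x hx with rfl | rfl | ⟨l, rfl⟩ <;> simp [ha, hb, hi]

lemma mem_liftedSet_of_inl (hGinl : ∀ a b : V, G'.Adj (Sum.inl a) (Sum.inl b) ↔ G.Adj a b)
    (hP : HasFormalPaths e G') {A : Set V} (hA : IsPathClosed G m A) {a : V}
    {v : V ⊕ ι × Fin (m - 1)} (ha : a ∈ A) (hv : v ∈ liftedSet A e)
    (p : G'.Walk (Sum.inl a) v) (hp : p.IsPath) (hpm : p.length ≤ m) :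
    ∀ x ∈ p.support, x ∈ liftedSet A e := by
  rcases v with b | ⟨j, l⟩
  · exact mem_liftedSet_of_inl_inl hGinl hP hA ha (inl_mem_liftedSet.mp hv) p hp hpm
  rcases hP.exists_exit_liftedSet hv p.reverse with hin | ⟨c, hc, q, r, hqr, hq⟩
  · intro x hx
    exact hin x (by simpa [Walk.support_reverse] using hx)
  have hr : r.reverse.IsPath := by
    have := hp.reverse
    rw [hqr] at this
    exact this.of_append_right.reverse
  have hrm : r.reverse.length ≤ m := by
    have := congrArg Walk.length hqr
    simp only [Walk.length_reverse, Walk.length_append] at this ⊢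
    omega
  intro x hx
  rw [← List.mem_reverse, ← Walk.support_reverse, hqr, Walk.mem_support_append_iff] at hx
  rcases hx with hx | hx
  · exact hq x hx
  · exact mem_liftedSet_of_inl_inl hGinl hP hA ha hc r.reverse hr hrm x
      (by simpa [Walk.support_reverse] using hx)

theorem isPathClosed_liftedSet
    (hGinl : ∀ a b : V, G'.Adj (Sum.inl a) (Sum.inl b) ↔ G.Adj a b)
    (hP : HasFormalPaths e G') {A : Set V} (hA : IsPathClosed G m A) :
    IsPathClosed G' m (liftedSet A e) := by
  intro u v hu hv p hp hpm
  rcases u with a | ⟨i, k⟩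
  · exact mem_liftedSet_of_inl hGinl hP hA (inl_mem_liftedSet.mp hu) hv p hp hpm
  rcases hP.exists_exit_liftedSet hu p with hin | ⟨c, hc, q, r, rfl, hq⟩
  · exact hin
  intro x hx
  rcases (Walk.mem_support_append_iff _ _).mp hx with hx | hx
  · exact hq x hx
  · rw [Walk.length_append] at hpm
    exact mem_liftedSet_of_inl hGinl hP hA hc hv r hp.of_append_right (by omega) x hx

end FormalPath

theorem P_closed_general {V ι : Type*} (G : SimpleGraph V) (m : ℕ)
    (e : ι → V × V)
    (G' : SimpleGraph (V ⊕ ι × Fin (m - 1)))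
    (hGinl : ∀ a b : V, G'.Adj (Sum.inl a) (Sum.inl b) ↔ G.Adj a b)
    (hGcross : ∀ (a : V) (i : ι) (k : Fin (m - 1)),
      G'.Adj (Sum.inl a) (Sum.inr (i, k)) ↔
        ((k : ℕ) = 0 ∧ a = (e i).1) ∨ ((k : ℕ) = m - 2 ∧ a = (e i).2))
    (hGinr : ∀ (i j : ι) (k l : Fin (m - 1)),
      G'.Adj (Sum.inr (i, k)) (Sum.inr (j, l)) ↔
        (i = j ∧ ((k : ℕ) + 1 = l ∨ (l : ℕ) + 1 = k)))
    (A : Set V)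
    (hclosed : ∀ (u v : V), u ∈ A → v ∈ A → ∀ p : G.Walk u v,
      p.IsPath → p.length ≤ m → ∀ x ∈ p.support, x ∈ A)
    (S : Set (V ⊕ ι × Fin (m - 1)))
    (hS : S = {z | (∃ x ∈ A, z = Sum.inl x) ∨
      (∃ (i : ι) (k : Fin (m - 1)),
        z = Sum.inr (i, k) ∧ (e i).1 ∈ A ∧ (e i).2 ∈ A)}) :
    ∀ (u v : V ⊕ ι × Fin (m - 1)), u ∈ S → v ∈ S → ∀ p : G'.Walk u v,
      p.IsPath → p.length ≤ m → ∀ x ∈ p.support, x ∈ S := by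
  subst hS
  exact FormalPath.isPathClosed_liftedSet hGinl ⟨hGcross, hGinr⟩ hclosed

/-- If `A` is closed in `B`, then `P(A)` (identified with the subgraph of `P(B)`
consisting of `A` together with the formal paths between vertices of `A`) is
closed in `P(B)`. -/
theorem P_closed {V ι : Type*} (G : SimpleGraph V) (n m : ℕ)
    (hn : 4 ≤ n) (hnm : n = 2 * m)
    (hcyc : ∀ (v : V) (c : G.Walk v v), c.IsCycle → n < c.length)
    (e : ι → V × V)
    (hne : ∀ i, (e i).1 ≠ (e i).2)
    (hfar : ∀ i, ¬ ∃ p : G.Walk (e i).1 (e i).2, p.IsPath ∧ p.length ≤ m)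
    (hinj : ∀ i j, (e i = e j ∨ e i = ((e j).2, (e j).1)) → i = j)
    (hsurj : ∀ a b : V, a ≠ b →
      (¬ ∃ p : G.Walk a b, p.IsPath ∧ p.length ≤ m) →
      ∃ i, e i = (a, b) ∨ e i = (b, a))
    (G' : SimpleGraph (V ⊕ ι × Fin (m - 1)))
    (hGinl : ∀ a b : V, G'.Adj (Sum.inl a) (Sum.inl b) ↔ G.Adj a b)
    (hGcross : ∀ (a : V) (i : ι) (k : Fin (m - 1)),
      G'.Adj (Sum.inl a) (Sum.inr (i, k)) ↔
        ((k : ℕ) = 0 ∧ a = (e i).1) ∨ ((k : ℕ) = m - 2 ∧ a = (e i).2))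
    (hGinr : ∀ (i j : ι) (k l : Fin (m - 1)),
      G'.Adj (Sum.inr (i, k)) (Sum.inr (j, l)) ↔
        (i = j ∧ ((k : ℕ) + 1 = l ∨ (l : ℕ) + 1 = k)))
    (A : Set V)
    (hclosed : ∀ (u v : V), u ∈ A → v ∈ A → ∀ p : G.Walk u v,
      p.IsPath → p.length ≤ m → ∀ x ∈ p.support, x ∈ A)
    (S : Set (V ⊕ ι × Fin (m - 1)))
    (hS : S = {z | (∃ x ∈ A, z = Sum.inl x) ∨
      (∃ (i : ι) (k : Fin (m - 1)),
        z = Sum.inr (i, k) ∧ (e i).1 ∈ A ∧ (e i).2 ∈ A)}) :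
    ∀ (u v : V ⊕ ι × Fin (m - 1)), u ∈ S → v ∈ S → ∀ p : G'.Walk u v,
      p.IsPath → p.length ≤ m → ∀ x ∈ p.support, x ∈ S :=
  P_closed_general G m e G' hGinl hGcross hGinr A hclosed S hS
end

section
/- Let n ≥ 4 be even. Let G be a simple graph on vertex set A ∪ B with M ⊆ A ∩ B, such that no edge of G joins a vertex of A \ M to a vertex of B \ M. Suppose A' ⊆ A and B' ⊆ B with M ⊆ A' ∩ B', A' is closed in (the induced subgraph on) A, and B' is closed in B, where 'closed' means every path of length at most n/2 between two vertices of the subset lies in the subset. Then A' ∪ B' is closed in G. -/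
section Aux

variable {V : Type*} {G : SimpleGraph V} {A B M A' B' : Set V} {m : ℕ}

/-- If a path lies entirely in `A`, starts in `A' ∪ B'`, and ends in `A'`,
then its support lies in `A' ∪ B'`. -/
lemma helperA_aux
    (hsep : ∀ x ∈ A \ M, ∀ y ∈ B \ M, ¬ G.Adj x y)
    (hB' : B' ⊆ B) (hMA' : M ⊆ A')
    (hclA : ∀ (u v : V), u ∈ A' → v ∈ A' → ∀ p : G.Walk u v,
      p.IsPath → p.length ≤ m → (∀ x ∈ p.support, x ∈ A) →
      ∀ x ∈ p.support, x ∈ A') :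
    ∀ {u v : V} (p : G.Walk u v), p.IsPath → p.length ≤ m →
      (∀ x ∈ p.support, x ∈ A) → (u ∈ A' ∨ u ∈ B') → v ∈ A' →
      ∀ x ∈ p.support, x ∈ A' ∨ x ∈ B' := by
  intro u v p
  induction p with
  | nil =>
    intro _ _ _ _ hv x hx
    simp only [SimpleGraph.Walk.support_nil, List.mem_singleton] at hx
    subst hx; exact Or.inl hv
  | @cons u w v h q ih =>
    intro hp hl hA hu hv x hx
    rcases hu with hu | hu
    · exact Or.inl (hclA u v hu hv _ hp hl hA x hx)
    · by_cases huM : u ∈ M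
      · exact Or.inl (hclA u v (hMA' huM) hv _ hp hl hA x hx)
      · have hwA : w ∈ A := hA w (by simp)
        have hwM : w ∈ M := by
          by_contra hwM
          exact hsep w ⟨hwA, hwM⟩ u ⟨hB' hu, huM⟩ h.symm
        simp only [SimpleGraph.Walk.support_cons, List.mem_cons] at hx
        rcases hx with rfl | hx'
        · exact Or.inr hu
        · refine ih hp.of_cons ?_ (fun y hy => hA y (by simp [hy])) (Or.inl (hMA' hwM)) hv x hx'
          simp only [SimpleGraph.Walk.length_cons] at hl
          omega

/-- If a path lies entirely in `A` with both endpoints in `A' ∪ B'`,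
then its support lies in `A' ∪ B'`. -/
lemma helperA_full
    (hsep : ∀ x ∈ A \ M, ∀ y ∈ B \ M, ¬ G.Adj x y)
    (hB' : B' ⊆ B) (hMA' : M ⊆ A')
    (hclA : ∀ (u v : V), u ∈ A' → v ∈ A' → ∀ p : G.Walk u v,
      p.IsPath → p.length ≤ m → (∀ x ∈ p.support, x ∈ A) →
      ∀ x ∈ p.support, x ∈ A') :
    ∀ {u v : V} (p : G.Walk u v), p.IsPath → p.length ≤ m →
      (∀ x ∈ p.support, x ∈ A) → (u ∈ A' ∨ u ∈ B') → (v ∈ A' ∨ v ∈ B') →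
      ∀ x ∈ p.support, x ∈ A' ∨ x ∈ B' := by
  intro u v p hp hl hA hu hv
  rcases hv with hv | hv
  · exact helperA_aux hsep hB' hMA' hclA p hp hl hA hu hv
  · rcases hu with hu | hu
    · -- reverse the path
      intro x hx
      refine helperA_aux hsep hB' hMA' hclA p.reverse hp.reverse (by simpa using hl)
        (fun y hy => hA y (by simpa using hy)) (Or.inr hv) hu x ?_
      simpa using hx
    · by_cases huM : u ∈ M
      · intro x hx
        refine helperA_aux hsep hB' hMA' hclA p.reverse hp.reverse (by simpa using hl)
          (fun y hy => hA y (by simpa using hy)) (Or.inr hv) (hMA' huM) x ?_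
        simpa using hx
      · -- u ∈ B' \ M; peel the first edge
        cases p with
        | nil =>
          intro x hx
          simp only [SimpleGraph.Walk.support_nil, List.mem_singleton] at hx
          subst hx; exact Or.inr hu
        | @cons u w v h q =>
          have hwA : w ∈ A := hA w (by simp)
          have hwM : w ∈ M := by
            by_contra hwM
            exact hsep w ⟨hwA, hwM⟩ u ⟨hB' hu, huM⟩ h.symm
          intro x hx
          simp only [SimpleGraph.Walk.support_cons, List.mem_cons] at hx
          rcases hx with rfl | hx'
          · exact Or.inr hu
          · refine helperA_aux hsep hB' hMA' hclA q.reverse hp.of_cons.reverse ?_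
              (fun y hy => hA y (by simp; right; simpa using hy)) (Or.inr hv) (hMA' hwM) x ?_
            · simp only [SimpleGraph.Walk.length_reverse]
              simp only [SimpleGraph.Walk.length_cons] at hl; omega
            · simpa using hx'

/-- Splitting a walk whose first two vertices are in `A` but that leaves `A`,
at a vertex of `M`, into two nontrivial pieces. -/
lemma findSplit
    (hV : A ∪ B = Set.univ) (hM : M ⊆ A ∩ B)
    (hsep : ∀ x ∈ A \ M, ∀ y ∈ B \ M, ¬ G.Adj x y) :
    ∀ {w v : V} (q : G.Walk w v), ∀ {u : V} (h : G.Adj u w), u ∈ A → w ∈ A →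
      (∃ x ∈ q.support, x ∉ A) →
      ∃ z, z ∈ M ∧ ∃ (q₁ : G.Walk u z) (r : G.Walk z v),
        q₁.append r = SimpleGraph.Walk.cons h q ∧ 1 ≤ q₁.length ∧ 1 ≤ r.length := by
  intro w v q
  induction q with
  | nil =>
    intro u h huA hwA hex
    obtain ⟨x, hx, hxA⟩ := hex
    simp only [SimpleGraph.Walk.support_nil, List.mem_singleton] at hx
    subst hx; exact absurd hwA hxA
  | @cons w w₂ v h₂ t ih =>
    intro u h huA hwA hex
    by_cases hw₂A : w₂ ∈ A
    · have hex' : ∃ x ∈ t.support, x ∉ A := by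
        obtain ⟨x, hx, hxA⟩ := hex
        simp only [SimpleGraph.Walk.support_cons, List.mem_cons] at hx
        rcases hx with rfl | hx'
        · exact absurd hwA hxA
        · exact ⟨x, hx', hxA⟩
      obtain ⟨z, hzM, q₁, r, heq, h1, h2⟩ := ih h₂ hwA hw₂A hex'
      refine ⟨z, hzM, SimpleGraph.Walk.cons h q₁, r, ?_, by simp, h2⟩
      rw [SimpleGraph.Walk.cons_append, heq]
    · have hw₂B : w₂ ∈ B := by
        have : w₂ ∈ A ∪ B := hV ▸ Set.mem_univ w₂
        exact this.resolve_left hw₂A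
      have hw₂M : w₂ ∉ M := fun hm => hw₂A (hM hm).1
      have hwM : w ∈ M := by
        by_contra hwM
        exact hsep w ⟨hwA, hwM⟩ w₂ ⟨hw₂B, hw₂M⟩ h₂
      exact ⟨w, hwM, SimpleGraph.Walk.cons h SimpleGraph.Walk.nil,
        SimpleGraph.Walk.cons h₂ t, by simp, by simp, by simp⟩

end Aux

/-- Monotonicity lemma for free amalgamation of graphs without short cycles:
the union of sets closed in the two sides is closed in the amalgam. -/
theorem union_of_closed_closed {V : Type*} (G : SimpleGraph V) (n m : ℕ)
    (hn : 4 ≤ n) (hnm : n = 2 * m)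
    (A B M A' B' : Set V)
    (hV : A ∪ B = Set.univ) (hM : M ⊆ A ∩ B)
    (hsep : ∀ x ∈ A \ M, ∀ y ∈ B \ M, ¬ G.Adj x y)
    (hA' : A' ⊆ A) (hB' : B' ⊆ B) (hMA' : M ⊆ A') (hMB' : M ⊆ B')
    (hclA : ∀ (u v : V), u ∈ A' → v ∈ A' → ∀ p : G.Walk u v,
      p.IsPath → p.length ≤ m → (∀ x ∈ p.support, x ∈ A) →
      ∀ x ∈ p.support, x ∈ A')
    (hclB : ∀ (u v : V), u ∈ B' → v ∈ B' → ∀ p : G.Walk u v,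
      p.IsPath → p.length ≤ m → (∀ x ∈ p.support, x ∈ B) →
      ∀ x ∈ p.support, x ∈ B')
    {u v : V} (hu : u ∈ A' ∪ B') (hv : v ∈ A' ∪ B')
    (p : G.Walk u v) (hp : p.IsPath) (hl : p.length ≤ m) :
    ∀ x ∈ p.support, x ∈ A' ∪ B' := by
  have hsepB : ∀ x ∈ B \ M, ∀ y ∈ A \ M, ¬ G.Adj x y :=
    fun x hx y hy hadj => hsep y hy x hx hadj.symm
  have hVB : B ∪ A = Set.univ := by rw [Set.union_comm]; exact hV
  have hMB2 : M ⊆ B ∩ A := fun x hx => ⟨(hM hx).2, (hM hx).1⟩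
  have memAB : ∀ x : V, x ∈ A ∨ x ∈ B := fun x => by
    have : x ∈ A ∪ B := hV ▸ Set.mem_univ x
    exact this
  suffices key : ∀ k : ℕ, ∀ (u v : V) (p : G.Walk u v), p.length ≤ k → p.IsPath →
      p.length ≤ m → (u ∈ A' ∨ u ∈ B') → (v ∈ A' ∨ v ∈ B') →
      ∀ x ∈ p.support, x ∈ A' ∨ x ∈ B' by
    intro x hx
    exact key p.length u v p le_rfl hp hl hu hv x hx
  intro k
  induction k with
  | zero =>
    intro u v p hk hp hl hu hv x hx
    cases p with
    | nil =>
      simp only [SimpleGraph.Walk.support_nil, List.mem_singleton] at hx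
      subst hx; exact hu
    | cons h q => simp at hk
  | succ k ih =>
    intro u v p hk hp hl hu hv
    cases p with
    | nil =>
      intro x hx
      simp only [SimpleGraph.Walk.support_nil, List.mem_singleton] at hx
      subst hx; exact hu
    | @cons u w v h q =>
      have hside : (u ∈ A ∧ w ∈ A) ∨ (u ∈ B ∧ w ∈ B) := by
        by_cases huA : u ∈ A
        · by_cases hwA : w ∈ A
          · exact Or.inl ⟨huA, hwA⟩
          · have hwB : w ∈ B := (memAB w).resolve_left hwA
            have hwM : w ∉ M := fun hm => hwA (hM hm).1
            have huM : u ∈ M := by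
              by_contra hm
              exact hsep u ⟨huA, hm⟩ w ⟨hwB, hwM⟩ h
            exact Or.inr ⟨(hM huM).2, hwB⟩
        · have huB : u ∈ B := (memAB u).resolve_left huA
          have hwB : w ∈ B := by
            by_contra hwB
            have hwA : w ∈ A := (memAB w).resolve_right hwB
            have hwM : w ∉ M := fun hm => hwB (hM hm).2
            have huM : u ∉ M := fun hm => huA (hM hm).1
            exact hsep w ⟨hwA, hwM⟩ u ⟨huB, huM⟩ h.symm
          exact Or.inr ⟨huB, hwB⟩
      rcases hside with ⟨huA, hwA⟩ | ⟨huB, hwB⟩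
      · by_cases hqA : ∀ x ∈ q.support, x ∈ A
        · have hsup : ∀ x ∈ (SimpleGraph.Walk.cons h q).support, x ∈ A := by
            intro x hx
            simp only [SimpleGraph.Walk.support_cons, List.mem_cons] at hx
            rcases hx with rfl | hx'
            · exact huA
            · exact hqA x hx'
          exact helperA_full hsep hB' hMA' hclA _ hp hl hsup hu hv
        · push_neg at hqA
          obtain ⟨z, hzM, q₁, r, heq, h1, h2⟩ := findSplit hV hM hsep q h huA hwA hqA
          have hp' : (q₁.append r).IsPath := heq ▸ hp
          have hlen : q₁.length + r.length = q.length + 1 := by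
            have := congrArg SimpleGraph.Walk.length heq
            simpa [SimpleGraph.Walk.length_append] using this
          have hql : q.length + 1 ≤ k + 1 := by simpa using hk
          have hqm : q.length + 1 ≤ m := by simpa using hl
          have hz' : z ∈ A' ∨ z ∈ B' := Or.inl (hMA' hzM)
          have s1 := ih u z q₁ (by omega) hp'.of_append_left (by omega) hu hz'
          have s2 := ih z v r (by omega) hp'.of_append_right (by omega) hz' hv
          intro x hx
          have hx' : x ∈ (q₁.append r).support := by rw [heq]; exact hx
          rcases (SimpleGraph.Walk.mem_support_append_iff _ _).mp hx' with h1' | h2'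
          · exact s1 x h1'
          · exact s2 x h2'
      · by_cases hqB : ∀ x ∈ q.support, x ∈ B
        · have hsup : ∀ x ∈ (SimpleGraph.Walk.cons h q).support, x ∈ B := by
            intro x hx
            simp only [SimpleGraph.Walk.support_cons, List.mem_cons] at hx
            rcases hx with rfl | hx'
            · exact huB
            · exact hqB x hx'
          intro x hx
          exact (helperA_full hsepB hA' hMB' hclB _ hp hl hsup hu.symm hv.symm x hx).symm
        · push_neg at hqB
          obtain ⟨z, hzM, q₁, r, heq, h1, h2⟩ := findSplit hVB hMB2 hsepB q h huB hwB hqB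
          have hp' : (q₁.append r).IsPath := heq ▸ hp
          have hlen : q₁.length + r.length = q.length + 1 := by
            have := congrArg SimpleGraph.Walk.length heq
            simpa [SimpleGraph.Walk.length_append] using this
          have hql : q.length + 1 ≤ k + 1 := by simpa using hk
          have hqm : q.length + 1 ≤ m := by simpa using hl
          have hz' : z ∈ A' ∨ z ∈ B' := Or.inr (hMB' hzM)
          have s1 := ih u z q₁ (by omega) hp'.of_append_left (by omega) hu hz'
          have s2 := ih z v r (by omega) hp'.of_append_right (by omega) hz' hv
          intro x hx
          have hx' : x ∈ (q₁.append r).support := by rw [heq]; exact hx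
          rcases (SimpleGraph.Walk.mem_support_append_iff _ _).mp hx' with h1' | h2'
          · exact s1 x h1'
          · exact s2 x h2'
end
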